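/- A real irrational number α is singular on average if and only if q_k^{1/k} → ∞, where (q_k) are the denominators of the convergents of α. -/

import Mathlib

open Filter MeasureTheory

/-- Distance from a real number to the nearest integer. -/
noncomputable def nint (x : ℝ) : ℝ := |x - round x|

/-- The denominator `q_k` of the `k`-th continued fraction convergent of `α`. -/
noncomputable def cfDen (α : ℝ) (k : ℕ) : ℝ := (GenContFract.of α).dens k

open scoped Classical

/-- `α` is singular on average: for every `c > 0`, the density of those `ℓ ∈ {1,…,N}`
for which `‖qα‖ ≤ c·2^{-ℓ}` has a solution with `0 < q ≤ 2^ℓ` tends to `1`. -/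
noncomputable def SingularOnAverage (α : ℝ) : Prop :=
  ∀ c : ℝ, 0 < c →
    Tendsto (fun N : ℕ =>
      (((Finset.Icc 1 N).filter (fun ℓ : ℕ =>
        ∃ q : ℕ, 0 < q ∧ q ≤ 2 ^ ℓ ∧ nint (q * α) ≤ c * 2 ^ (-(ℓ : ℤ)))).card : ℝ) / N)
      atTop (nhds 1)

/-!
Let `k(ℓ)` be the largest index with `q_k ≤ 2^ℓ`. By the best approximation property of the
convergents, `ℓ` is a good scale for `c` exactly when `‖q_{k(ℓ)} α‖ ≤ c 2^{-ℓ}`, and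
`1 / (q_{k+1} + q_k) < ‖q_k α‖ ≤ 1 / q_{k+1}`.

If `q_k^{1/k} → ∞`, then `k(N) = o(N)`. Bad scales sharing the same `k(ℓ)` lie in a window of
length `log₂ (1/c)`, so there are `O(k(N))` bad scales up to `N`.

Conversely, a dyadic range `(2^ℓ, 2^{ℓ+1}]` containing some `q_k` makes `ℓ` bad for `c = 1/4`,
and `q_{k+2} ≥ 2 q_k` makes these `ℓ` distinct along even `k`. If `q_K < 2^{LK}` for infinitely
many `K`, the scales up to `N ≈ log₂ q_K ≤ LK` then contain about `K/2` bad ones, a proportion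
of at least `1/(4L)`.
-/

open Finset GenContFract Topology

theorem abs_sub_le_abs_sub_of_isUnit {K : Type*} [Field K] [LinearOrder K] [IsStrictOrderedRing K]
    {α : K} {p₀ q₀ p₁ q₁ p q : ℤ} (hdet : IsUnit (p₀ * q₁ - q₀ * p₁))
    (hsign : (q₀ * α - p₀) * (q₁ * α - p₁) ≤ 0) (hq₀ : 0 ≤ q₀) (hq : 0 < q) (hq₁ : q < q₁) :
    |q₀ * α - p₀| ≤ |q * α - p| := by
  -- Write `(q, p) = x (q₀, p₀) + y (q₁, p₁)` over `ℤ`; then `x ≠ 0` and `x y ≤ 0`, so the two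
  -- error terms `x (q₀ α - p₀)` and `y (q₁ α - p₁)` have the same sign.
  set d := p₀ * q₁ - q₀ * p₁
  have hdd : d * d = 1 := Int.isUnit_mul_self hdet
  set x := d * (p * q₁ - q * p₁)
  set y := d * (p₀ * q - q₀ * p)
  have hxq : x * q₀ + y * q₁ = q := by linear_combination q * hdd
  have hxp : x * p₀ + y * p₁ = p := by linear_combination p * hdd
  have hkey : (q : K) * α - p = x * (q₀ * α - p₀) + y * (q₁ * α - p₁) := by
    rw [← hxq, ← hxp]; push_cast; ring
  have hx : x ≠ 0 := by
    rintro hx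
    rw [hx, zero_mul, zero_add] at hxq
    rcases le_or_gt y 0 with hy | hy <;> nlinarith
  have hxy : x * y ≤ 0 := by
    by_contra! h
    rcases pos_and_pos_or_neg_and_neg_of_mul_pos h with ⟨hx, hy⟩ | ⟨hx, hy⟩ <;> nlinarith
  have hsame : 0 ≤ (x * (q₀ * α - p₀)) * (y * (q₁ * α - p₁)) := by
    have : ((x * y : ℤ) : K) ≤ 0 := by exact_mod_cast hxy
    push_cast at this
    nlinarith
  calc |(q₀ : K) * α - p₀| ≤ |(x : K)| * |q₀ * α - p₀| :=
        le_mul_of_one_le_left (abs_nonneg _) (by exact_mod_cast Int.one_le_abs hx)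
    _ = |x * (q₀ * α - p₀)| := (abs_mul _ _).symm
    _ ≤ |q * α - p| := by
        rw [hkey, ← sq_le_sq]
        nlinarith

theorem Finset.card_le_of_forall_lt_add {s : Finset ℕ} {C : ℕ}
    (h : ∀ a ∈ s, ∀ b ∈ s, a ≤ b → b < a + C) : #s ≤ C := by
  rcases s.eq_empty_or_nonempty with rfl | hs
  · simp
  · calc #s ≤ #(Ico (s.min' hs) (s.min' hs + C)) := card_le_card fun b hb ↦
          mem_Ico.2 ⟨s.min'_le b hb, h _ (s.min'_mem hs) b hb (s.min'_le b hb)⟩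
      _ = C := by simp

theorem tendsto_card_filter_div_one_iff (p : ℕ → Prop) [DecidablePred p] :
    Tendsto (fun N : ℕ ↦ (#{ℓ ∈ Icc 1 N | p ℓ} : ℝ) / N) atTop (𝓝 1) ↔
      Tendsto (fun N : ℕ ↦ (#{ℓ ∈ Icc 1 N | ¬p ℓ} : ℝ) / N) atTop (𝓝 0) := by
  have h : ∀ᶠ N : ℕ in atTop,
      (#{ℓ ∈ Icc 1 N | p ℓ} : ℝ) / N = 1 - (#{ℓ ∈ Icc 1 N | ¬p ℓ} : ℝ) / N := by
    filter_upwards [eventually_ge_atTop 1] with N hN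
    have hcard := card_filter_add_card_filter_not (s := Icc 1 N) p
    rw [Nat.card_Icc, Nat.add_sub_cancel] at hcard
    rw [eq_sub_iff_add_eq, ← add_div, ← Nat.cast_add, hcard, div_self (by positivity)]
  rw [tendsto_congr' h]
  constructor
  · intro h1; simpa using (tendsto_const_nhds (x := (1:ℝ))).sub h1
  · intro h0; simpa using (tendsto_const_nhds (x := (1:ℝ))).sub h0

theorem exists_two_pow_lt_le {x : ℝ} (hx : 1 < x) : ∃ ℓ : ℕ, 2 ^ ℓ < x ∧ x ≤ 2 ^ (ℓ + 1) := by
  have hex : ∃ n : ℕ, x ≤ 2 ^ n := (pow_unbounded_of_one_lt x one_lt_two).imp fun _ h ↦ h.le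
  have h0 : Nat.find hex ≠ 0 := fun h ↦ by
    have := Nat.find_spec hex
    rw [h, pow_zero] at this
    linarith
  refine ⟨Nat.find hex - 1, not_le.1 (Nat.find_min hex (by omega)), ?_⟩
  rw [Nat.sub_add_cancel (Nat.one_le_iff_ne_zero.2 h0)]
  exact Nat.find_spec hex

noncomputable def cfNum (α : ℝ) (k : ℕ) : ℝ := (GenContFract.of α).nums k

theorem Irrational.not_terminatedAt_of {α : ℝ} (hα : Irrational α) (n : ℕ) :
    ¬(GenContFract.of α).TerminatedAt n := fun h ↦ by
  obtain ⟨q, hq⟩ := (terminates_iff_rat α).1 ⟨n, h⟩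
  exact hα ⟨q, hq.symm⟩

section ContinuedFraction

variable {α : ℝ}

theorem exists_s_get?_eq (hα : Irrational α) (n : ℕ) :
    ∃ b : ℕ, 1 ≤ b ∧ (GenContFract.of α).s.get? n = some ⟨1, b⟩ := by
  obtain ⟨gp, hgp⟩ := Option.ne_none_iff_exists'.1 (hα.not_terminatedAt_of n)
  obtain ⟨ha, z, hz⟩ := of_partNum_eq_one_and_exists_int_partDen_eq hgp
  have hb : (1 : ℝ) ≤ gp.b := of_one_le_get?_partDen (partDen_eq_s_b hgp)
  rw [hz] at hb
  have hz1 : 1 ≤ z := by exact_mod_cast hb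
  refine ⟨z.toNat, by omega, ?_⟩
  have hzb : ((z.toNat : ℕ) : ℝ) = gp.b := by rw [hz]; exact_mod_cast Int.toNat_of_nonneg (by omega)
  rw [hgp, ← ha, hzb]

theorem exists_cfNum_cfDen_add_two (hα : Irrational α) (n : ℕ) :
    ∃ b : ℕ, 1 ≤ b ∧ cfNum α (n + 2) = b * cfNum α (n + 1) + cfNum α n ∧
      cfDen α (n + 2) = b * cfDen α (n + 1) + cfDen α n := by
  obtain ⟨b, hb, hs⟩ := exists_s_get?_eq hα (n + 1)
  exact ⟨b, hb, by simpa [cfNum] using nums_recurrence hs rfl rfl,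
    by simpa [cfDen] using dens_recurrence hs rfl rfl⟩

theorem exists_cfDen_eq_natCast_cfNum_eq_intCast (hα : Irrational α) (n : ℕ) :
    ∃ (q : ℕ) (p : ℤ), cfDen α n = q ∧ cfNum α n = p := by
  induction n using Nat.twoStepInduction with
  | zero => exact ⟨1, ⌊α⌋, by simp [cfDen], by simp [cfNum, zeroth_num_eq_h, of_h_eq_floor]⟩
  | one =>
    obtain ⟨b, -, hs⟩ := exists_s_get?_eq hα 0
    exact ⟨b, b * ⌊α⌋ + 1, by simp [cfDen, first_den_eq hs],
      by simp [cfNum, first_num_eq hs, of_h_eq_floor]⟩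
  | more n ih ih' =>
    obtain ⟨q, p, hq, hp⟩ := ih
    obtain ⟨q', p', hq', hp'⟩ := ih'
    obtain ⟨b, -, hnum, hden⟩ := exists_cfNum_cfDen_add_two hα n
    exact ⟨b * q' + q, b * p' + p, by rw [hden, hq, hq']; push_cast; ring,
      by rw [hnum, hp, hp']; push_cast; ring⟩

theorem one_le_cfDen (hα : Irrational α) (n : ℕ) : 1 ≤ cfDen α n := by
  have := succ_nth_fib_le_of_nth_den (v := α) (n := n) (Or.inr (hα.not_terminatedAt_of _))
  exact le_trans (by exact_mod_cast Nat.fib_pos.2 n.succ_pos) this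

theorem cfDen_pos (hα : Irrational α) (n : ℕ) : 0 < cfDen α n :=
  (one_le_cfDen hα n).trans_lt' zero_lt_one

theorem cfDen_mono : Monotone (cfDen α) :=
  monotone_nat_of_le_succ fun _ ↦ of_den_mono

theorem cfDen_add_cfDen_le (hα : Irrational α) (n : ℕ) :
    cfDen α (n + 1) + cfDen α n ≤ cfDen α (n + 2) := by
  obtain ⟨b, hb, -, hden⟩ := exists_cfNum_cfDen_add_two hα n
  rw [hden]
  gcongr
  exact le_mul_of_one_le_left (by linarith [one_le_cfDen hα (n + 1)]) (by exact_mod_cast hb)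

theorem two_mul_cfDen_le (hα : Irrational α) (n : ℕ) : 2 * cfDen α n ≤ cfDen α (n + 2) := by
  linarith [cfDen_add_cfDen_le hα n, cfDen_mono (α := α) n.le_succ]

theorem natCast_le_cfDen (hα : Irrational α) (n : ℕ) : (n : ℝ) ≤ cfDen α n := by
  induction n using Nat.twoStepInduction with
  | zero => simpa using (one_le_cfDen hα 0).trans' zero_le_one
  | one => simpa using one_le_cfDen hα 1
  | more n _ ih' =>
    push_cast at ih' ⊢
    linarith [cfDen_add_cfDen_le hα n, one_le_cfDen hα n]

theorem exists_cfDen_mul_sub_cfNum_eq (hα : Irrational α) (n : ℕ) :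
    ∃ D, cfDen α (n + 1) ≤ D ∧ D < cfDen α (n + 1) + cfDen α n ∧
      cfDen α n * α - cfNum α n = (-1) ^ n / D := by
  obtain ⟨ifp', hst'⟩ := Option.ne_none_iff_exists'.1
    (mt of_terminatedAt_n_iff_succ_nth_intFractPair_stream_eq_none.2 (hα.not_terminatedAt_of n))
  obtain ⟨ifp, hst, hfr, -⟩ := IntFractPair.succ_nth_stream_eq_some_iff.1 hst'
  have hfr0 : 0 < ifp.fr := (IntFractPair.nth_stream_fr_nonneg hst).lt_of_ne' hfr
  set B := ((GenContFract.of α).contsAux (n + 1)).b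
  set pB := ((GenContFract.of α).contsAux n).b
  have hB : cfDen α n = B := by rw [cfDen, den_eq_conts_b, nth_cont_eq_succ_nth_contAux]
  have hB' : cfDen α (n + 1) = ⌊ifp.fr⁻¹⌋ * B + pB := by
    rw [cfDen, den_eq_conts_b, nth_cont_eq_succ_nth_contAux,
      contsAux_recurrence (get?_of_eq_some_of_get?_intFractPair_stream_fr_ne_zero hst hfr) rfl rfl]
    simp [IntFractPair.of, B, pB]
  have hB0 : 0 < B := hB ▸ cfDen_pos hα n
  have hpB : 0 ≤ pB := zero_le_of_contsAux_b
  have hsub : α - cfNum α n / B = (-1) ^ n / (B * (ifp.fr⁻¹ * B + pB)) := by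
    have h := sub_convs_eq hst
    simp only [if_neg hfr, conv_eq_num_div_den] at h
    rwa [← hB]
  -- `ifp.fr⁻¹` is the complete quotient `α_{n+1}`, and `D = α_{n+1} q_n + q_{n-1}`.
  refine ⟨ifp.fr⁻¹ * B + pB, ?_, ?_, ?_⟩
  · rw [hB']; gcongr; exact Int.floor_le _
  · rw [hB', hB]; nlinarith [Int.lt_floor_add_one ifp.fr⁻¹]
  · have : 0 < ifp.fr⁻¹ * B + pB := by positivity
    rw [hB]
    field_simp at hsub ⊢
    linear_combination hsub

theorem one_div_lt_abs_cfDen_mul_sub_cfNum (hα : Irrational α) (n : ℕ) :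
    1 / (cfDen α (n + 1) + cfDen α n) < |cfDen α n * α - cfNum α n| := by
  obtain ⟨D, hD, hD', hE⟩ := exists_cfDen_mul_sub_cfNum_eq hα n
  have hD0 : 0 < D := (cfDen_pos hα _).trans_le hD
  rw [hE, abs_div, abs_pow, abs_neg, abs_one, one_pow, abs_of_pos hD0]
  exact one_div_lt_one_div_of_lt hD0 hD'

theorem abs_cfDen_mul_sub_cfNum_le (hα : Irrational α) (n : ℕ) :
    |cfDen α n * α - cfNum α n| ≤ 1 / cfDen α (n + 1) := by
  obtain ⟨D, hD, -, hE⟩ := exists_cfDen_mul_sub_cfNum_eq hα n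
  have hD0 := cfDen_pos hα (n + 1)
  rw [hE, abs_div, abs_pow, abs_neg, abs_one, one_pow, abs_of_pos (hD0.trans_le hD)]
  exact one_div_le_one_div_of_le hD0 hD

theorem cfDen_mul_sub_cfNum_mul_succ_nonpos (hα : Irrational α) (n : ℕ) :
    (cfDen α n * α - cfNum α n) * (cfDen α (n + 1) * α - cfNum α (n + 1)) ≤ 0 := by
  obtain ⟨D, hD, -, hE⟩ := exists_cfDen_mul_sub_cfNum_eq hα n
  obtain ⟨D', hD', -, hE'⟩ := exists_cfDen_mul_sub_cfNum_eq hα (n + 1)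
  have hD0 : 0 < D := (cfDen_pos hα _).trans_le hD
  have hD0' : 0 < D' := (cfDen_pos hα _).trans_le hD'
  rw [hE, hE', div_mul_div_comm, ← pow_add, Odd.neg_one_pow ⟨n, by ring⟩]
  exact div_nonpos_of_nonpos_of_nonneg (by norm_num) (by positivity)

theorem abs_cfDen_mul_sub_cfNum_le_abs_sub (hα : Irrational α) {n q : ℕ} (p : ℤ) (hq : 0 < q)
    (hqn : (q : ℝ) < cfDen α (n + 1)) : |cfDen α n * α - cfNum α n| ≤ |q * α - p| := by
  obtain ⟨q₀, p₀, hq₀, hp₀⟩ := exists_cfDen_eq_natCast_cfNum_eq_intCast hα n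
  obtain ⟨q₁, p₁, hq₁, hp₁⟩ := exists_cfDen_eq_natCast_cfNum_eq_intCast hα (n + 1)
  have hdet : p₀ * (q₁ : ℤ) - q₀ * p₁ = (-1) ^ (n + 1) := by
    have h : cfNum α n * cfDen α (n + 1) - cfDen α n * cfNum α (n + 1) = (-1) ^ (n + 1) :=
      SimpContFract.determinant (s := SimpContFract.of α) (hα.not_terminatedAt_of n)
    rw [hq₀, hp₀, hq₁, hp₁] at h
    exact_mod_cast h
  have hsign := cfDen_mul_sub_cfNum_mul_succ_nonpos hα n
  rw [hq₀, hp₀, hq₁, hp₁] at hsign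
  rw [hq₁] at hqn
  rw [hq₀, hp₀]
  have := abs_sub_le_abs_sub_of_isUnit (α := α) (p₀ := p₀) (q₀ := q₀) (p₁ := p₁) (q₁ := q₁)
    (p := p) (q := q) (hdet ▸ isUnit_neg_one.pow _) (by simpa using hsign) (by positivity)
    (by exact_mod_cast hq) (by exact_mod_cast hqn)
  simpa using this

end ContinuedFraction

/-- Searching up to `⌊x⌋₊` suffices because `k ≤ q_k` (`natCast_le_cfDen`). -/
noncomputable def cfDenIndex (α x : ℝ) : ℕ := Nat.findGreatest (fun k ↦ cfDen α k ≤ x) ⌊x⌋₊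

def IsGoodScale (α c : ℝ) (ℓ : ℕ) : Prop :=
  ∃ q : ℕ, 0 < q ∧ q ≤ 2 ^ ℓ ∧ nint (q * α) ≤ c * 2 ^ (-(ℓ : ℤ))

noncomputable def badScales (α c : ℝ) (N : ℕ) : Finset ℕ := {ℓ ∈ Icc 1 N | ¬IsGoodScale α c ℓ}

theorem singularOnAverage_iff_tendsto_card_badScales {α : ℝ} :
    SingularOnAverage α ↔
      ∀ c > 0, Tendsto (fun N : ℕ ↦ (#(badScales α c N) : ℝ) / N) atTop (𝓝 0) :=
  forall₂_congr fun c _ ↦ tendsto_card_filter_div_one_iff (IsGoodScale α c)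

section Scales

variable {α x : ℝ} {k : ℕ}

theorem cfDen_cfDenIndex_le (hx : 1 ≤ x) : cfDen α (cfDenIndex α x) ≤ x :=
  Nat.findGreatest_spec (P := fun k ↦ cfDen α k ≤ x) (Nat.zero_le _) (by simpa [cfDen] using hx)

theorem le_cfDenIndex (hα : Irrational α) (h : cfDen α k ≤ x) : k ≤ cfDenIndex α x :=
  Nat.le_findGreatest (Nat.le_floor ((natCast_le_cfDen hα k).trans h)) h

theorem lt_cfDen_cfDenIndex_add_one (hα : Irrational α) (x : ℝ) :
    x < cfDen α (cfDenIndex α x + 1) :=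
  lt_of_not_ge fun h ↦ (le_cfDenIndex hα h).not_gt (Nat.lt_succ_self _)

theorem cfDenIndex_lt_of_lt_cfDen (hx : 1 ≤ x) (h : x < cfDen α k) : cfDenIndex α x < k :=
  lt_of_not_ge fun hk ↦ (h.trans_le (cfDen_mono hk)).not_ge (cfDen_cfDenIndex_le hx)

theorem cfDenIndex_mono (hα : Irrational α) {y : ℝ} (hx : 1 ≤ x) (hxy : x ≤ y) :
    cfDenIndex α x ≤ cfDenIndex α y :=
  le_cfDenIndex hα ((cfDen_cfDenIndex_le hx).trans hxy)

variable {c : ℝ} {ℓ : ℕ}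

theorem isGoodScale_iff (hα : Irrational α) :
    IsGoodScale α c ℓ ↔
      |cfDen α (cfDenIndex α (2 ^ ℓ)) * α - cfNum α (cfDenIndex α (2 ^ ℓ))| ≤ c / 2 ^ ℓ := by
  simp only [IsGoodScale, zpow_neg, zpow_natCast, ← div_eq_mul_inv]
  set k := cfDenIndex α (2 ^ ℓ)
  constructor
  · rintro ⟨q, hq, hqℓ, hnint⟩
    refine (abs_cfDen_mul_sub_cfNum_le_abs_sub hα (round (q * α)) hq ?_).trans hnint
    exact (by exact_mod_cast hqℓ : (q : ℝ) ≤ 2 ^ ℓ).trans_lt (lt_cfDen_cfDenIndex_add_one hα _)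
  · intro h
    obtain ⟨q, p, hq, hp⟩ := exists_cfDen_eq_natCast_cfNum_eq_intCast hα k
    refine ⟨q, ?_, ?_, (round_le _ p).trans ?_⟩
    · exact_mod_cast hq ▸ cfDen_pos hα k
    · exact_mod_cast hq ▸ cfDen_cfDenIndex_le (one_le_pow₀ one_le_two)
    · rwa [← hq, ← hp]

theorem not_isGoodScale_of_two_pow_lt_cfDen (hα : Irrational α) (hc : c ≤ 1 / 4)
    (h₁ : 2 ^ ℓ < cfDen α k) (h₂ : cfDen α k ≤ 2 ^ (ℓ + 1)) : ¬IsGoodScale α c ℓ := by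
  rw [isGoodScale_iff hα, not_le]
  set m := cfDenIndex α (2 ^ ℓ)
  have hm : m < k := cfDenIndex_lt_of_lt_cfDen (one_le_pow₀ one_le_two) h₁
  have hm₁ : cfDen α (m + 1) ≤ 2 ^ (ℓ + 1) := (cfDen_mono hm).trans h₂
  have hm₀ : cfDen α m ≤ 2 ^ (ℓ + 1) := (cfDen_mono m.le_succ).trans hm₁
  calc c / 2 ^ ℓ ≤ 1 / 4 / 2 ^ ℓ := by gcongr
    _ = 1 / (2 ^ (ℓ + 1) + 2 ^ (ℓ + 1)) := by rw [pow_succ]; ring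
    _ ≤ 1 / (cfDen α (m + 1) + cfDen α m) :=
        one_div_le_one_div_of_le (add_pos (cfDen_pos hα _) (cfDen_pos hα _)) (by linarith)
    _ < _ := one_div_lt_abs_cfDen_mul_sub_cfNum hα m

theorem lt_add_of_not_isGoodScale (hα : Irrational α) (hc : 0 < c) {C : ℕ} (hC : c⁻¹ ≤ 2 ^ C)
    {ℓ' : ℕ} (hℓ : ¬IsGoodScale α c ℓ) (hk : cfDenIndex α (2 ^ ℓ') = cfDenIndex α (2 ^ ℓ)) :
    ℓ' < ℓ + C := by
  rw [isGoodScale_iff hα, not_le] at hℓ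
  have h : c / 2 ^ ℓ < 1 / 2 ^ ℓ' := calc
    c / 2 ^ ℓ < _ := hℓ
    _ ≤ 1 / cfDen α (cfDenIndex α (2 ^ ℓ) + 1) := abs_cfDen_mul_sub_cfNum_le hα _
    _ < 1 / 2 ^ ℓ' := by
        rw [← hk]
        exact one_div_lt_one_div_of_lt (by positivity) (lt_cfDen_cfDenIndex_add_one hα _)
  rw [div_lt_div_iff₀ (by positivity) (by positivity), one_mul] at h
  have : (2 : ℝ) ^ ℓ' < 2 ^ (ℓ + C) := calc
    (2 : ℝ) ^ ℓ' = c⁻¹ * (c * 2 ^ ℓ') := by field_simp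
    _ < c⁻¹ * 2 ^ ℓ := by gcongr
    _ ≤ 2 ^ C * 2 ^ ℓ := by gcongr
    _ = 2 ^ (ℓ + C) := by rw [pow_add, mul_comm]
  exact (pow_lt_pow_iff_right₀ one_lt_two).1 this

theorem card_badScales_le (hα : Irrational α) (hc : 0 < c) {C : ℕ} (hC : c⁻¹ ≤ 2 ^ C) (N : ℕ) :
    #(badScales α c N) ≤ C * (cfDenIndex α (2 ^ N) + 1) := by
  rw [← card_range (cfDenIndex α (2 ^ N) + 1)]
  refine card_le_mul_card_image_of_maps_to (f := fun ℓ ↦ cfDenIndex α (2 ^ ℓ)) (fun ℓ hℓ ↦ ?_) C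
    fun k _ ↦ card_le_of_forall_lt_add fun a ha b hb _ ↦ ?_
  · simp only [badScales, mem_filter, mem_Icc] at hℓ
    exact mem_range_succ_iff.2 <|
      cfDenIndex_mono hα (one_le_pow₀ one_le_two) (pow_le_pow_right₀ one_le_two hℓ.1.2)
  · simp only [badScales, mem_filter] at ha hb
    exact lt_add_of_not_isGoodScale hα hc hC ha.1.2 (hb.2.trans ha.2.symm)

theorem le_card_badScales (hα : Irrational α) (hc : c ≤ 1 / 4) {K N : ℕ}
    (hK : cfDen α K ≤ 2 ^ N) : (K - 2) / 2 ≤ #(badScales α c N) := by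
  choose ℓ hℓ using fun j : ℕ ↦ exists_two_pow_lt_le (x := cfDen α (2 * j + 2)) <| by
    have := natCast_le_cfDen hα (2 * j + 2)
    push_cast at this
    linarith
  -- `q_{2j+4} ≥ 2 q_{2j+2}`, so these denominators lie in distinct dyadic ranges.
  have hmono : StrictMono ℓ := strictMono_nat_of_lt_succ fun j ↦ by
    have : (2 : ℝ) ^ (ℓ j + 1) < 2 ^ (ℓ (j + 1) + 1) := calc
      (2 : ℝ) ^ (ℓ j + 1) = 2 * 2 ^ ℓ j := by ring
      _ < 2 * cfDen α (2 * j + 2) := by linarith [(hℓ j).1]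
      _ ≤ cfDen α (2 * (j + 1) + 2) := two_mul_cfDen_le hα _
      _ ≤ 2 ^ (ℓ (j + 1) + 1) := (hℓ (j + 1)).2
    have := (pow_lt_pow_iff_right₀ one_lt_two).1 this
    omega
  calc (K - 2) / 2 = #(Icc 1 ((K - 2) / 2)) := by simp
    _ ≤ #(badScales α c N) := card_le_card_of_injOn ℓ (fun j hj ↦ ?_) hmono.injective.injOn
  simp only [coe_Icc, Set.mem_Icc] at hj
  simp only [badScales, coe_filter, mem_Icc, Set.mem_ofPred_eq]
  refine ⟨⟨hj.1.trans (hmono.id_le j), ?_⟩,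
    not_isGoodScale_of_two_pow_lt_cfDen hα hc (hℓ j).1 (hℓ j).2⟩
  have : (2 : ℝ) ^ ℓ j < 2 ^ N := (hℓ j).1.trans_le ((cfDen_mono (by omega)).trans hK)
  exact ((pow_lt_pow_iff_right₀ one_lt_two).1 this).le

end Scales

section Growth

variable {α : ℝ}

theorem eventually_two_pow_mul_le_cfDen
    (hT : Tendsto (fun k : ℕ ↦ cfDen α k ^ (k : ℝ)⁻¹) atTop atTop) (M : ℕ) :
    ∀ᶠ k : ℕ in atTop, (2 : ℝ) ^ (M * k) ≤ cfDen α k := by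
  filter_upwards [hT.eventually_ge_atTop (2 ^ M), eventually_gt_atTop 0] with k hk hk0
  rw [pow_mul, ← Real.rpow_natCast]
  exact (Real.le_rpow_inv_iff_of_pos (by positivity) zero_le_of_den (by positivity)).1 hk

theorem frequently_cfDen_lt_two_pow_mul
    (hT : ¬Tendsto (fun k : ℕ ↦ cfDen α k ^ (k : ℝ)⁻¹) atTop atTop) :
    ∃ L : ℕ, ∃ᶠ K in atTop, cfDen α K < 2 ^ (L * K) := by
  simp only [tendsto_atTop, not_forall, not_eventually, not_le] at hT
  obtain ⟨b, hb⟩ := hT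
  obtain ⟨L, hL⟩ := pow_unbounded_of_one_lt b one_lt_two
  refine ⟨L, (hb.and_eventually (eventually_gt_atTop 0)).mono fun K ⟨hK, hK0⟩ ↦ ?_⟩
  rw [pow_mul, ← Real.rpow_natCast]
  exact (Real.rpow_inv_lt_iff_of_pos zero_le_of_den (by positivity) (by positivity)).1 (hK.trans hL)

theorem tendsto_cfDenIndex_two_pow (hα : Irrational α) :
    Tendsto (fun N : ℕ ↦ cfDenIndex α (2 ^ N)) atTop atTop := by
  refine tendsto_atTop.2 fun k ↦ ?_
  obtain ⟨N₀, hN₀⟩ := pow_unbounded_of_one_lt (cfDen α k) one_lt_two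
  filter_upwards [eventually_ge_atTop N₀] with N hN
  exact le_cfDenIndex hα (hN₀.le.trans (pow_le_pow_right₀ one_le_two hN))

theorem tendsto_cfDenIndex_two_pow_div (hα : Irrational α)
    (hT : Tendsto (fun k : ℕ ↦ cfDen α k ^ (k : ℝ)⁻¹) atTop atTop) :
    Tendsto (fun N : ℕ ↦ (cfDenIndex α (2 ^ N) : ℝ) / N) atTop (𝓝 0) := by
  refine tendsto_order.2 ⟨fun a ha ↦ .of_forall fun N ↦ ha.trans_le (by positivity), fun a ha ↦ ?_⟩
  obtain ⟨M, hM⟩ := exists_nat_one_div_lt ha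
  filter_upwards [(tendsto_cfDenIndex_two_pow hα).eventually
    (eventually_two_pow_mul_le_cfDen hT (M + 1)), eventually_gt_atTop 0] with N hN hN0
  have hMN : (M + 1) * cfDenIndex α (2 ^ N) ≤ N :=
    (pow_le_pow_iff_right₀ one_lt_two).1 (hN.trans (cfDen_cfDenIndex_le (one_le_pow₀ one_le_two)))
  refine lt_of_le_of_lt ?_ hM
  rw [div_le_div_iff₀ (by positivity) (by positivity), one_mul, mul_comm]
  exact_mod_cast hMN

theorem singularOnAverage_of_tendsto (hα : Irrational α)
    (hT : Tendsto (fun k : ℕ ↦ cfDen α k ^ (k : ℝ)⁻¹) atTop atTop) : SingularOnAverage α := by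
  refine singularOnAverage_iff_tendsto_card_badScales.2 fun c hc ↦ ?_
  obtain ⟨C, hC⟩ := pow_unbounded_of_one_lt c⁻¹ one_lt_two
  have hlim : Tendsto (fun N : ℕ ↦ C * ((cfDenIndex α (2 ^ N) : ℝ) / N) + C * (1 / N))
      atTop (𝓝 0) := by
    simpa using ((tendsto_cfDenIndex_two_pow_div hα hT).const_mul (C : ℝ)).add
      (tendsto_one_div_atTop_nhds_zero_nat.const_mul (C : ℝ))
  refine squeeze_zero (fun N ↦ by positivity) (fun N ↦ ?_) hlim
  rw [← mul_add, ← add_div, ← mul_div_assoc]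
  gcongr
  exact_mod_cast card_badScales_le hα hc hC.le N

theorem exists_le_mul_card_badScales (hα : Irrational α) {K L : ℕ} (hK : 6 ≤ K)
    (hKL : cfDen α K < 2 ^ (L * K)) :
    ∃ N : ℕ, K ≤ 2 ^ N ∧ N ≤ 4 * L * #(badScales α (1 / 4) N) := by
  have hKq := natCast_le_cfDen hα K
  obtain ⟨ℓ, hℓ, hℓ'⟩ := exists_two_pow_lt_le (x := cfDen α K) (by
    have : (6 : ℝ) ≤ K := by exact_mod_cast hK
    linarith)
  have hbad := le_card_badScales hα le_rfl hℓ'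
  have hℓL : ℓ < L * K := (pow_lt_pow_iff_right₀ one_lt_two).1 (hℓ.trans hKL)
  refine ⟨ℓ + 1, by exact_mod_cast hKq.trans hℓ', ?_⟩
  calc ℓ + 1 ≤ L * K := hℓL
    _ ≤ L * (4 * ((K - 2) / 2)) := Nat.mul_le_mul_left _ (by omega)
    _ ≤ 4 * L * #(badScales α (1 / 4) (ℓ + 1)) := by
        rw [← mul_assoc, mul_comm L 4]
        exact Nat.mul_le_mul_left _ hbad

theorem tendsto_of_singularOnAverage (hα : Irrational α) (hS : SingularOnAverage α) :
    Tendsto (fun k : ℕ ↦ cfDen α k ^ (k : ℝ)⁻¹) atTop atTop := by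
  by_contra hT
  obtain ⟨L, hL⟩ := frequently_cfDen_lt_two_pow_mul hT
  have hsmall : ∀ᶠ N : ℕ in atTop, (4 * L + 1) * #(badScales α (1 / 4) N) < N := by
    have hbad := singularOnAverage_iff_tendsto_card_badScales.1 hS (1 / 4) (by norm_num)
    filter_upwards [hbad.eventually (gt_mem_nhds (by positivity : (0 : ℝ) < 1 / (4 * L + 1))),
      eventually_gt_atTop 0] with N hN hN0
    rw [div_lt_div_iff₀ (by positivity) (by positivity), one_mul, mul_comm] at hN
    exact_mod_cast hN
  obtain ⟨N₀, hN₀⟩ := eventually_atTop.1 hsmall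
  obtain ⟨K, hKL, hK⟩ := (hL.and_eventually (eventually_ge_atTop (max 6 (2 ^ N₀)))).exists
  obtain ⟨N, hKN, hN⟩ := exists_le_mul_card_badScales hα (le_of_max_le_left hK) hKL
  have := hN₀ N ((Nat.pow_le_pow_iff_right one_lt_two).1 ((le_of_max_le_right hK).trans hKN))
  nlinarith

end Growth

theorem stmt7 (α : ℝ) (hα : Irrational α) :
    SingularOnAverage α ↔
      Tendsto (fun k : ℕ => cfDen α k ^ ((k : ℝ)⁻¹)) atTop atTop :=
  ⟨tendsto_of_singularOnAverage hα, singularOnAverage_of_tendsto hα⟩
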